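/- Let q, x ∈ ℂ with |q| < 1. Define the Rogers–Szegő polynomials R_n(x|q) = ∑_{j=0}^{n} [n,j]_q · x^j and the polynomials R̂_n(x|q) = (−1)^n · ∑_{s=0}^{n} [n,s]_q · x^s · q^{s(s−1)/2 + (n−s)(n−s−1)/2}. Then ∑_{j=0}^{n} [n,j]_q · R_j(x|q) · R̂_{n−j}(x|q) = δ_{n,0} for all n ≥ 0; in particular this sum vanishes for every n ≥ 1. Equivalently, the infinite lower triangular matrices with (n,j) entries R_{n−j}(x|q)/(q;q)_{n−j} and R̂_{n−j}(x|q)/(q;q)_{n−j} respectively are mutually inverse. -/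

import Mathlib

open Finset

/-- The finite q-Pochhammer symbol `(a;q)_n = ∏_{i=0}^{n-1} (1 - a q^i)`. -/
noncomputable def qPoch (a q : ℂ) (n : ℕ) : ℂ := ∏ i ∈ Finset.range n, (1 - a * q ^ i)

/-- The Gaussian binomial coefficient `[n,j]_q = (q;q)_n/((q;q)_{n-j}(q;q)_j)`. -/
noncomputable def gaussBinom (q : ℂ) (n j : ℕ) : ℂ :=
  qPoch q q n / (qPoch q q (n - j) * qPoch q q j)

/-- The Rogers–Szegő polynomial `R_n(x|q) = ∑_{j=0}^n [n,j]_q x^j`. -/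
noncomputable def rogersSzego (q x : ℂ) (n : ℕ) : ℂ :=
  ∑ j ∈ Finset.range (n + 1), gaussBinom q n j * x ^ j

/-- `R̂_n(x|q) = (-1)^n ∑_{s=0}^n [n,s]_q x^s q^{s(s-1)/2 + (n-s)(n-s-1)/2}`. -/
noncomputable def rogersSzegoHat (q x : ℂ) (n : ℕ) : ℂ :=
  (-1 : ℂ) ^ n * ∑ s ∈ Finset.range (n + 1),
    gaussBinom q n s * x ^ s * q ^ (s * (s - 1) / 2 + (n - s) * (n - s - 1) / 2)

/-!
The `q`-exponential generating function `∑ aₙ tⁿ / (q;q)ₙ` turns `q`-binomial convolution into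
multiplication of power series. Since `R_n` and `R̂_n` are such convolutions,
`∑ R_n tⁿ/(q;q)_n = e(xt) e(t)` and `∑ R̂_n tⁿ/(q;q)_n = E(xt) E(t)`, where
`e(t) = ∑ tⁿ/(q;q)ₙ` and `E(t) = ∑ (-1)ⁿ q^(n(n-1)/2) tⁿ/(q;q)ₙ`. The functional equations
`e(qt) = (1 - t) e(t)` and `E(t) = (1 - t) E(qt)` make `e E` invariant under `t ↦ q t`; as `q` is
not a root of unity, `e E` is constant, hence `e E = 1`. So the two generating functions are
mutually inverse, and both identities are coefficient comparisons in their product.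
-/

open PowerSeries

lemma qPoch_succ (a q : ℂ) (n : ℕ) : qPoch a q (n + 1) = qPoch a q n * (1 - a * q ^ n) :=
  prod_range_succ _ _

lemma qPoch_self_ne_zero {q : ℂ} (hq : ∀ n, 0 < n → q ^ n ≠ 1) (n : ℕ) : qPoch q q n ≠ 0 :=
  prod_ne_zero_iff.mpr fun i _ => by
    rw [← pow_succ', sub_ne_zero]
    exact (hq (i + 1) i.succ_pos).symm

lemma pow_ne_one_of_norm_lt_one {𝕜 : Type*} [NormedDivisionRing 𝕜] {q : 𝕜}
    (hq : ‖q‖ < 1) (n : ℕ) (hn : 0 < n) : q ^ n ≠ 1 := by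
  intro h
  have := pow_lt_one₀ (norm_nonneg q) hq hn.ne'
  rw [← norm_pow, h, norm_one] at this
  exact this.false

lemma PowerSeries.eq_C_of_rescale_eq_self {R : Type*} [CommRing R] [IsDomain R] {a : R}
    (ha : ∀ n, 0 < n → a ^ n ≠ 1) {f : PowerSeries R} (hf : rescale a f = f) :
    f = C (constantCoeff f) := by
  ext n
  rcases n.eq_zero_or_pos with rfl | hn
  · simp
  · have h : (a ^ n - 1) * coeff n f = 0 := by
      rw [sub_mul, one_mul, ← coeff_rescale, hf, sub_self]
    simp [coeff_C, hn.ne', (mul_eq_zero.mp h).resolve_left (sub_ne_zero.mpr (ha n hn))]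

lemma PowerSeries.coeff_mul_eq_sum_Icc {R : Type*} [CommSemiring R] (φ ψ : PowerSeries R)
    {j n : ℕ} (hjn : j ≤ n) :
    coeff (n - j) (φ * ψ) = ∑ k ∈ Icc j n, coeff (n - k) φ * coeff (k - j) ψ := by
  rw [coeff_mul]
  symm
  refine sum_nbij' (fun k => (n - k, k - j)) (fun p => p.2 + j) ?_ ?_ ?_ ?_ (fun _ _ => rfl)
  · intro k hk
    rw [mem_Icc] at hk
    rw [HasAntidiagonal.mem_antidiagonal]
    omega
  · rintro ⟨a, b⟩ h
    rw [HasAntidiagonal.mem_antidiagonal] at h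
    rw [mem_Icc]
    omega
  · intro k hk
    rw [mem_Icc] at hk
    omega
  · rintro ⟨a, b⟩ h
    rw [HasAntidiagonal.mem_antidiagonal] at h
    simp only [Prod.mk.injEq]
    omega

noncomputable def qEGF (q : ℂ) (a : ℕ → ℂ) : PowerSeries ℂ := mk fun n => a n / qPoch q q n

lemma qEGF_injective {q : ℂ} (hq : ∀ n, 0 < n → q ^ n ≠ 1) : Function.Injective (qEGF q) :=
  fun a b h => funext fun n => by
    simpa [qEGF, div_left_inj' (qPoch_self_ne_zero hq n)] using congrArg (coeff n) h

lemma qEGF_mul {q : ℂ} (hq : ∀ n, 0 < n → q ^ n ≠ 1) (a b : ℕ → ℂ) :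
    qEGF q a * qEGF q b =
      qEGF q fun n => ∑ j ∈ range (n + 1), gaussBinom q n j * a j * b (n - j) := by
  ext n
  rw [coeff_mul, Nat.sum_antidiagonal_eq_sum_range_succ_mk]
  simp only [qEGF, coeff_mk, sum_div]
  refine sum_congr rfl fun j _ => ?_
  have := qPoch_self_ne_zero hq n
  have := qPoch_self_ne_zero hq j
  have := qPoch_self_ne_zero hq (n - j)
  simp only [gaussBinom]
  field_simp

lemma rescale_qEGF (q x : ℂ) (a : ℕ → ℂ) :
    rescale x (qEGF q a) = qEGF q fun n => x ^ n * a n := by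
  simp only [qEGF, rescale_mk, mul_div_assoc]

lemma qEGF_ite_eq_zero (q : ℂ) : qEGF q (fun n => if n = 0 then 1 else 0) = 1 := by
  ext n
  rcases n with _ | n <;> simp [qEGF, qPoch]

noncomputable def qExpSeries (q : ℂ) : PowerSeries ℂ := qEGF q fun _ => 1

noncomputable def qExpSeriesInv (q : ℂ) : PowerSeries ℂ :=
  qEGF q fun n => (-1) ^ n * q ^ (n * (n - 1) / 2)

lemma rescale_qExpSeries {q : ℂ} (hq : ∀ n, 0 < n → q ^ n ≠ 1) :
    rescale q (qExpSeries q) = (1 - X) * qExpSeries q := by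
  ext (_ | n)
  · simp [qExpSeries, qEGF, qPoch]
  · obtain ⟨hP, hs⟩ := mul_ne_zero_iff.mp (qPoch_succ q q n ▸ qPoch_self_ne_zero hq (n + 1))
    simp only [qExpSeries, qEGF, rescale_mk, sub_mul, one_mul, map_sub, coeff_succ_X_mul,
      coeff_mk, qPoch_succ]
    field_simp
    ring

lemma qExpSeriesInv_eq_rescale {q : ℂ} (hq : ∀ n, 0 < n → q ^ n ≠ 1) :
    qExpSeriesInv q = (1 - X) * rescale q (qExpSeriesInv q) := by
  ext (_ | n)
  · simp [qExpSeriesInv, qEGF, qPoch, rescale_mk]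
  · obtain ⟨hP, hs⟩ := mul_ne_zero_iff.mp (qPoch_succ q q n ▸ qPoch_self_ne_zero hq (n + 1))
    simp only [qExpSeriesInv, qEGF, rescale_mk, sub_mul, one_mul, map_sub, coeff_succ_X_mul,
      coeff_mk, qPoch_succ, Nat.triangle_succ]
    field_simp
    ring

lemma qExpSeries_mul_qExpSeriesInv {q : ℂ} (hq : ∀ n, 0 < n → q ^ n ≠ 1) :
    qExpSeries q * qExpSeriesInv q = 1 := by
  have h : rescale q (qExpSeries q * qExpSeriesInv q) = qExpSeries q * qExpSeriesInv q := by
    conv_rhs => rw [qExpSeriesInv_eq_rescale hq]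
    rw [map_mul, rescale_qExpSeries hq]
    ring
  rw [eq_C_of_rescale_eq_self hq h]
  simp [qExpSeries, qExpSeriesInv, qEGF, qPoch]

lemma qEGF_rogersSzego (q x : ℂ) (hq : ∀ n, 0 < n → q ^ n ≠ 1) :
    qEGF q (rogersSzego q x) = rescale x (qExpSeries q) * qExpSeries q := by
  rw [qExpSeries, rescale_qEGF, qEGF_mul hq]
  simp only [mul_one]
  rfl

lemma qEGF_rogersSzegoHat (q x : ℂ) (hq : ∀ n, 0 < n → q ^ n ≠ 1) :
    qEGF q (rogersSzegoHat q x) = rescale x (qExpSeriesInv q) * qExpSeriesInv q := by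
  rw [qExpSeriesInv, rescale_qEGF, qEGF_mul hq]
  congr 1
  funext n
  rw [rogersSzegoHat, mul_sum]
  refine sum_congr rfl fun s hs => ?_
  rw [← pow_mul_pow_sub (-1 : ℂ) (Nat.lt_succ_iff.mp (mem_range.mp hs))]
  ring

lemma qEGF_rogersSzego_mul_qEGF_rogersSzegoHat (q x : ℂ) (hq : ∀ n, 0 < n → q ^ n ≠ 1) :
    qEGF q (rogersSzego q x) * qEGF q (rogersSzegoHat q x) = 1 := by
  rw [qEGF_rogersSzego q x hq, qEGF_rogersSzegoHat q x hq,
    mul_mul_mul_comm, ← map_mul, qExpSeries_mul_qExpSeriesInv hq, map_one, one_mul]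

/-- `∑_{j=0}^n [n,j]_q R_j(x|q) R̂_{n-j}(x|q) = δ_{n,0}`; equivalently, the lower
triangular matrices with entries `R_{n-j}(x|q)/(q;q)_{n-j}` and `R̂_{n-j}(x|q)/(q;q)_{n-j}`
are mutually inverse. -/
theorem rogersSzego_inverse (q x : ℂ) (hq : ‖q‖ < 1) :
    (∀ n : ℕ,
      ∑ j ∈ Finset.range (n + 1),
        gaussBinom q n j * rogersSzego q x j * rogersSzegoHat q x (n - j) =
        if n = 0 then 1 else 0) ∧
    (∀ n j : ℕ, j ≤ n →
      ∑ k ∈ Finset.Icc j n,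
        (rogersSzego q x (n - k) / qPoch q q (n - k)) *
          (rogersSzegoHat q x (k - j) / qPoch q q (k - j)) =
        if n = j then 1 else 0) := by
  have hq' := pow_ne_one_of_norm_lt_one hq
  have hprod := qEGF_rogersSzego_mul_qEGF_rogersSzegoHat q x hq'
  constructor
  · intro n
    rw [qEGF_mul hq', ← qEGF_ite_eq_zero q] at hprod
    exact congrFun (qEGF_injective hq' hprod) n
  · intro n j hjn
    have h := coeff_mul_eq_sum_Icc (qEGF q (rogersSzego q x)) (qEGF q (rogersSzegoHat q x)) hjn
    rw [hprod, coeff_one] at h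
    simp only [qEGF, coeff_mk] at h
    rw [← h]
    split_ifs <;> first | rfl | omega
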